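/- arXiv:2101.09950 — 2 statements merged into one kernel-verified Lean document; each statement's English description precedes it below -/
import Mathlib

section
/- Let E and F be real Banach spaces. Then E and F are isomorphic as Banach spaces (there exists a continuous linear bijection with continuous inverse) if and only if the rings K(E) and K(F) of compact operators, with composition as multiplication, are isomorphic as rings. -/
/-!
A ring isomorphism `φ : K(E) ≃+* K(F)` preserves the purely ring-theoretic class of nonzero
idempotents `p` whose corner `p K p` is commutative, and in `K(E)` these are exactly the rank-one
projections `f ⊗ x = rankOne f x : z ↦ f z • x` with `f x = 1`: two independent vectors in the
range of `p` would produce non-commuting elements of `p K p`. So `φ (f₀ ⊗ x₀) = g₀ ⊗ y₀`, and on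
the line `ℝ (f₀ ⊗ x₀)`, which `φ` maps into the line `ℝ (g₀ ⊗ y₀)`, `φ` induces a ring
endomorphism of `ℝ`, i.e. is `ℝ`-linear. Then `T x = φ (f₀ ⊗ x) y₀` is a linear bijection
`E → F` with `T (a x) = φ a (T x)`. This intertwining makes every `h ∘ T`, `h ∈ F*`, continuous,
so `T` is continuous by the closed graph theorem and an isomorphism by the open mapping theorem.
-/

open Cardinal

/-- The non-unital ring `K(E)` of compact operators on `E`, with composition as
multiplication. -/
def compactOperators (𝕜 : Type*) [NontriviallyNormedField 𝕜]
    (E : Type*) [NormedAddCommGroup E] [NormedSpace 𝕜 E] :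
    NonUnitalSubalgebra 𝕜 (E →L[𝕜] E) where
  carrier := {f : E →L[𝕜] E | IsCompactOperator f}
  add_mem' := fun hf hg => hf.add hg
  zero_mem' := isCompactOperator_zero
  smul_mem' := fun c _ hf => hf.smul c
  mul_mem' := fun {_ g} hf _ => hf.comp_clm g

structure IsCommCornerIdempotent {R : Type*} [NonUnitalSemiring R] (p : R) : Prop where
  isIdempotentElem : IsIdempotentElem p
  ne_zero : p ≠ 0
  commute_corner (a b : R) : Commute (p * a * p) (p * b * p)

theorem IsCommCornerIdempotent.map {R S : Type*} [NonUnitalSemiring R] [NonUnitalSemiring S]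
    {p : R} (hp : IsCommCornerIdempotent p) (φ : R ≃+* S) : IsCommCornerIdempotent (φ p) where
  isIdempotentElem := hp.isIdempotentElem.map φ
  ne_zero := (map_ne_zero_iff φ φ.injective).2 hp.ne_zero
  commute_corner a b := by
    simpa only [map_mul, RingEquiv.apply_symm_apply] using
      (hp.commute_corner (φ.symm a) (φ.symm b)).map φ

def ContinuousLinearEquiv.conjCompactOperators {𝕜 E F : Type*} [NontriviallyNormedField 𝕜]
    [NormedAddCommGroup E] [NormedSpace 𝕜 E] [NormedAddCommGroup F] [NormedSpace 𝕜 F]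
    (u : E ≃L[𝕜] F) : compactOperators 𝕜 E ≃+* compactOperators 𝕜 F where
  toFun a := ⟨u.conjContinuousAlgEquiv a, (a.2.comp_clm _).continuous_comp u.continuous⟩
  invFun b :=
    ⟨u.conjContinuousAlgEquiv.symm b, (b.2.comp_clm _).continuous_comp u.symm.continuous⟩
  left_inv a := Subtype.ext (u.conjContinuousAlgEquiv.symm_apply_apply a)
  right_inv b := Subtype.ext (u.conjContinuousAlgEquiv.apply_symm_apply b)
  map_mul' a b := Subtype.ext (map_mul u.conjContinuousAlgEquiv (a : E →L[𝕜] E) b)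
  map_add' a b := Subtype.ext (_root_.map_add u.conjContinuousAlgEquiv (a : E →L[𝕜] E) b)

theorem isCompactOperator_smulRight {𝕜 E G : Type*} [NontriviallyNormedField 𝕜]
    [LocallyCompactSpace 𝕜] [NormedAddCommGroup E] [NormedSpace 𝕜 E] [NormedAddCommGroup G]
    [NormedSpace 𝕜 G] (f : StrongDual 𝕜 E) (x : G) : IsCompactOperator (f.smulRight x) :=
  (isCompactOperator_of_locallyCompactSpace_rng
    ((ContinuousLinearMap.id 𝕜 𝕜).smulRight x)).comp_clm f

namespace compactOperators

variable {𝕜 E : Type*} [NontriviallyNormedField 𝕜] [LocallyCompactSpace 𝕜]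
  [NormedAddCommGroup E] [NormedSpace 𝕜 E]

def rankOne (f : StrongDual 𝕜 E) (x : E) : compactOperators 𝕜 E :=
  ⟨f.smulRight x, isCompactOperator_smulRight f x⟩

@[simp]
theorem rankOne_apply (f : StrongDual 𝕜 E) (x z : E) :
    (rankOne f x : E →L[𝕜] E) z = f z • x :=
  rfl

theorem rankOne_add (f : StrongDual 𝕜 E) (x y : E) :
    rankOne f (x + y) = rankOne f x + rankOne f y := by
  ext z; simp

theorem rankOne_smul (f : StrongDual 𝕜 E) (c : 𝕜) (x : E) :
    rankOne f (c • x) = c • rankOne f x := by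
  ext z; simp [smul_comm c]

theorem mul_rankOne (a : compactOperators 𝕜 E) (f : StrongDual 𝕜 E) (x : E) :
    a * rankOne f x = rankOne f ((a : E →L[𝕜] E) x) := by
  ext z; simp

theorem rankOne_mul_rankOne (f g : StrongDual 𝕜 E) (x y : E) :
    rankOne f x * rankOne g y = rankOne g (f y • x) :=
  mul_rankOne _ _ _

theorem rankOne_ne_zero {f : StrongDual 𝕜 E} {x : E} (hfx : f x = 1) : rankOne f x ≠ 0 := by
  intro h
  have hx : x = 0 := by simpa [hfx] using congr(($h : E →L[𝕜] E) x)
  simp [hx] at hfx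

theorem rankOne_mul_mul_rankOne (f : StrongDual 𝕜 E) (x : E) (a : compactOperators 𝕜 E) :
    rankOne f x * a * rankOne f x = f ((a : E →L[𝕜] E) x) • rankOne f x := by
  ext z; simp [smul_smul, mul_comm]

theorem isCommCornerIdempotent_rankOne {f : StrongDual 𝕜 E} {x : E} (hfx : f x = 1) :
    IsCommCornerIdempotent (rankOne f x) where
  isIdempotentElem := by
    rw [IsIdempotentElem, rankOne_mul_rankOne, hfx, one_smul]
  ne_zero := rankOne_ne_zero hfx
  commute_corner a b := by
    simp only [rankOne_mul_mul_rankOne]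
    exact ((Commute.refl _).smul_left _).smul_right _

variable [SeparatingDual 𝕜 E]

theorem exists_smul_eq_of_isCommCornerIdempotent {p : compactOperators 𝕜 E}
    (hp : IsCommCornerIdempotent p) {y : E} (hpy : (p : E →L[𝕜] E) y = y) (hy : y ≠ 0) (z : E) :
    ∃ c : 𝕜, (p : E →L[𝕜] E) z = c • y := by
  by_contra! h
  set y' := (p : E →L[𝕜] E) z
  have hpy' : (p : E →L[𝕜] E) y' = y' := congr(($hp.isIdempotentElem : E →L[𝕜] E) z)
  obtain ⟨u, hu⟩ := SeparatingDual.exists_eq_one (R := 𝕜) hy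
  obtain ⟨v, hv⟩ := SeparatingDual.exists_eq_one (R := 𝕜) (sub_ne_zero.2 (h (u y')))
  set η := v - v y • u
  have hηy : η y = 0 := by simp [η, hu]
  have hηy' : η y' = 1 := by
    simp only [map_sub, map_smul, smul_eq_mul] at hv
    simp only [η, sub_apply, smul_apply, smul_eq_mul]
    linear_combination hv
  -- on `y`, the corner of `rankOne η y` after that of `rankOne u y'` is the identity,
  -- while the reverse product vanishes
  have := congr(($((hp.commute_corner (rankOne η y) (rankOne u y')).eq) : E →L[𝕜] E) y)
  simp [hpy, hpy', hu, hηy, hηy'] at this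
  exact hy this

theorem exists_eq_rankOne_of_isCommCornerIdempotent {p : compactOperators 𝕜 E}
    (hp : IsCommCornerIdempotent p) :
    ∃ (g : StrongDual 𝕜 E) (y : E), g y = 1 ∧ p = rankOne g y := by
  obtain ⟨z, hz⟩ : ∃ z, (p : E →L[𝕜] E) z ≠ 0 := by
    by_contra! h
    exact hp.ne_zero (Subtype.ext (ContinuousLinearMap.ext h))
  set y := (p : E →L[𝕜] E) z
  have hpy : (p : E →L[𝕜] E) y = y := congr(($hp.isIdempotentElem : E →L[𝕜] E) z)
  obtain ⟨h, hhy⟩ := SeparatingDual.exists_eq_one (R := 𝕜) hz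
  choose c hc using exists_smul_eq_of_isCommCornerIdempotent hp hpy hz
  refine ⟨h.comp (p : E →L[𝕜] E), y, by simp [hpy, hhy], ?_⟩
  ext w
  simp [hc w, hhy]

end compactOperators

theorem LinearMap.continuous_of_forall_continuous_dual_comp {𝕜 E F : Type*}
    [NontriviallyNormedField 𝕜] [NormedAddCommGroup E] [NormedSpace 𝕜 E] [CompleteSpace E]
    [NormedAddCommGroup F] [NormedSpace 𝕜 F] [CompleteSpace F] [SeparatingDual 𝕜 F]
    (T : E →ₗ[𝕜] F) (hT : ∀ h : StrongDual 𝕜 F, Continuous (h ∘ T)) : Continuous T :=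
  T.continuous_of_seq_closed_graph fun _ x y hu hTu =>
    SeparatingDual.eq_iff_forall_dual_eq.2 fun h =>
      tendsto_nhds_unique ((h.continuous.tendsto y).comp hTu) (((hT h).tendsto x).comp hu)

namespace compactOperators

variable {E F : Type*} [NormedAddCommGroup E] [NormedSpace ℝ E] [NormedAddCommGroup F]
  [NormedSpace ℝ F] (φ : compactOperators ℝ E ≃+* compactOperators ℝ F)
  {f₀ : StrongDual ℝ E} {x₀ : E} {g₀ : StrongDual ℝ F} {y₀ : F}

theorem map_smul_rankOne (hfx : f₀ x₀ = 1) (hgy : g₀ y₀ = 1)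
    (hφ : φ (rankOne f₀ x₀) = rankOne g₀ y₀) (c : ℝ) :
    φ (c • rankOne f₀ x₀) = c • rankOne g₀ y₀ := by
  set p := rankOne f₀ x₀
  set q := rankOne g₀ y₀
  have hp : p * p = p := (isCommCornerIdempotent_rankOne hfx).isIdempotentElem
  have hq : q * q = q := (isCommCornerIdempotent_rankOne hgy).isIdempotentElem
  have hline (c : ℝ) : φ (c • p) = g₀ ((φ (c • p) : F →L[ℝ] F) y₀) • q :=
    calc φ (c • p) = φ (p * (c • p) * p) := by rw [mul_smul_comm, smul_mul_assoc, hp, hp]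
      _ = q * φ (c • p) * q := by rw [map_mul, map_mul, hφ]
      _ = _ := rankOne_mul_mul_rankOne _ _ _
  have hinj : Function.Injective fun t : ℝ => t • q := fun _ _ h =>
    smul_left_injective ℝ (rankOne_ne_zero hgy) h
  -- the scalar by which `φ` moves `c • p` is a ring endomorphism of `ℝ`, hence the identity
  obtain ⟨s, hs⟩ : ∃ s : ℝ → ℝ, ∀ c, φ (c • p) = s c • q := ⟨_, hline⟩
  have hone : s 1 = 1 := hinj <| by dsimp only; rw [← hs, one_smul, one_smul, hφ]
  have hmul (c d : ℝ) : s (c * d) = s c * s d := hinj <| by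
    dsimp only
    rw [← hs, ← hq, ← smul_mul_smul_comm, ← hs, ← hs, ← map_mul, smul_mul_smul_comm, hp]
  have hadd (c d : ℝ) : s (c + d) = s c + s d := hinj <| by
    dsimp only
    rw [← hs, add_smul, add_smul, ← hs, ← hs, map_add]
  let ψ : ℝ →+* ℝ :=
    { toFun := s
      map_one' := hone
      map_mul' := hmul
      map_zero' := by simpa using hadd 0 0
      map_add' := hadd }
  rw [hs c]
  exact congr($(Subsingleton.elim ψ (RingHom.id ℝ)) c • q)

noncomputable def intertwiner (hfx : f₀ x₀ = 1) (hgy : g₀ y₀ = 1)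
    (hφ : φ (rankOne f₀ x₀) = rankOne g₀ y₀) : E →ₗ[ℝ] F where
  toFun x := (φ (rankOne f₀ x) : F →L[ℝ] F) y₀
  map_add' x y := by simp [rankOne_add]
  map_smul' c x := by
    have : rankOne f₀ (c • x) = rankOne f₀ x * c • rankOne f₀ x₀ := by
      rw [mul_smul_comm, rankOne_mul_rankOne, hfx, one_smul, rankOne_smul]
    simp [this, map_smul_rankOne φ hfx hgy hφ, hgy]

variable {φ} (hfx : f₀ x₀ = 1) (hgy : g₀ y₀ = 1) (hφ : φ (rankOne f₀ x₀) = rankOne g₀ y₀)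

theorem intertwiner_apply_apply (a : compactOperators ℝ E) (x : E) :
    intertwiner φ hfx hgy hφ ((a : E →L[ℝ] E) x) =
      (φ a : F →L[ℝ] F) (intertwiner φ hfx hgy hφ x) := by
  simp [intertwiner, ← mul_rankOne]

theorem intertwiner_apply_x₀ : intertwiner φ hfx hgy hφ x₀ = y₀ := by
  simp [intertwiner, hφ, hgy]

theorem intertwiner_injective : Function.Injective (intertwiner φ hfx hgy hφ) := by
  refine (injective_iff_map_eq_zero _).2 fun x hx => ?_
  by_contra hx0
  obtain ⟨u, hux⟩ := SeparatingDual.exists_eq_one (R := ℝ) hx0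
  have := intertwiner_apply_apply hfx hgy hφ (rankOne u x₀) x
  simp [hux, hx, intertwiner_apply_x₀] at this
  simp [this] at hgy

theorem intertwiner_surjective : Function.Surjective (intertwiner φ hfx hgy hφ) := fun y =>
  ⟨(φ.symm (rankOne g₀ y) : E →L[ℝ] E) x₀, by
    simp [intertwiner_apply_apply, intertwiner_apply_x₀, hgy]⟩

theorem dual_apply_intertwiner (h : StrongDual ℝ F) (x : E) :
    h (intertwiner φ hfx hgy hφ x) = f₀ ((φ.symm (rankOne h y₀) : E →L[ℝ] E) x) := by
  have : (φ.symm (rankOne h y₀) : E →L[ℝ] E) x = h (intertwiner φ hfx hgy hφ x) • x₀ := by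
    apply intertwiner_injective hfx hgy hφ
    simp [intertwiner_apply_apply, intertwiner_apply_x₀]
  simp [this, hfx]

theorem continuous_intertwiner [CompleteSpace E] [CompleteSpace F] :
    Continuous (intertwiner φ hfx hgy hφ) :=
  (intertwiner φ hfx hgy hφ).continuous_of_forall_continuous_dual_comp fun h => by
    simp only [Function.comp_def, dual_apply_intertwiner]
    fun_prop

theorem nonempty_continuousLinearEquiv_of_ringEquiv [CompleteSpace E] [CompleteSpace F]
    [Nontrivial E] (φ : compactOperators ℝ E ≃+* compactOperators ℝ F) :
    Nonempty (E ≃L[ℝ] F) := by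
  obtain ⟨x₀, hx₀⟩ := exists_ne (0 : E)
  obtain ⟨f₀, hfx⟩ := SeparatingDual.exists_eq_one (R := ℝ) hx₀
  obtain ⟨g₀, y₀, hgy, hφ⟩ :=
    exists_eq_rankOne_of_isCommCornerIdempotent ((isCommCornerIdempotent_rankOne hfx).map φ)
  exact ⟨.ofBijective ⟨intertwiner φ hfx hgy hφ, continuous_intertwiner hfx hgy hφ⟩
    (LinearMap.ker_eq_bot.2 (intertwiner_injective hfx hgy hφ))
    (LinearMap.range_eq_top.2 (intertwiner_surjective hfx hgy hφ))⟩

end compactOperators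

/-- Let `E` and `F` be real Banach spaces. Then `E` and `F` are isomorphic as Banach spaces
(there is a continuous linear bijection with continuous inverse between them) if and only if
the rings `K(E)` and `K(F)` of compact operators, with composition as multiplication, are
isomorphic as rings. -/
theorem statement14
    (E : Type u) [NormedAddCommGroup E] [NormedSpace ℝ E] [CompleteSpace E]
    (F : Type v) [NormedAddCommGroup F] [NormedSpace ℝ F] [CompleteSpace F] :
    Nonempty (E ≃L[ℝ] F) ↔
      Nonempty ((compactOperators ℝ E) ≃+* (compactOperators ℝ F)) := by
  refine ⟨fun ⟨u⟩ => ⟨u.conjCompactOperators⟩, fun ⟨φ⟩ => ?_⟩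
  rcases subsingleton_or_nontrivial E with hE | hE
  · rcases subsingleton_or_nontrivial F with hF | hF
    · obtain ⟨e, -⟩ := (ContinuousLinearMap.isInvertible_zero_iff (R := ℝ)).2 ⟨hE, hF⟩
      exact ⟨e⟩
    · obtain ⟨e⟩ := compactOperators.nonempty_continuousLinearEquiv_of_ringEquiv φ.symm
      exact ⟨e.symm⟩
  · exact compactOperators.nonempty_continuousLinearEquiv_of_ringEquiv φ
end

section
/- Let λ be an infinite cardinal and let (E_i)_{i ∈ I} be a family of real Banach spaces, each having a dense subset of cardinality at most λ, such that for distinct i, j ∈ I there is no continuous linear bijection with continuous inverse between E_i and E_j. Then the cardinality of I is at most 2^λ. -/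
/-!
Choose in each `E i` a dense family `f i : λ → E i`. The distances `dist (f i a) (f i b)`
determine `E i` up to isometry: for the pseudometric they induce on `λ`, `E i` is a completion
of `λ`. By Mazur–Ulam an isometry of real normed spaces is affine, so the spaces are isomorphic.
Hence `i ↦ (dist (f i a) (f i b))_{a,b}` is injective into `ℝ^(λ × λ)`, a set of cardinality
`𝔠 ^ λ = 2 ^ λ`.
-/

open Set Function Cardinal UniformSpace

universe u

theorem Isometry.surjective_of_denseRange {X Y : Type*} [EMetricSpace X] [CompleteSpace X]
    [EMetricSpace Y] {f : X → Y} (hf : Isometry f) (hd : DenseRange f) : Surjective f :=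
  range_eq_univ.mp <| hf.isClosedEmbedding.isClosed_range.closure_eq ▸ hd.closure_range

theorem Isometry.nonempty_completion_isometryEquiv {α X : Type*} [PseudoMetricSpace α]
    [MetricSpace X] [CompleteSpace X] {f : α → X} (hf : Isometry f) (hd : DenseRange f) :
    Nonempty (Completion α ≃ᵢ X) := by
  have hext : Isometry (Completion.extension f) := hf.completion_extension
  have hext_dense : DenseRange (Completion.extension f) :=
    hd.mono <| range_subset_iff.mpr fun a : α =>
      ⟨a, Completion.extension_coe hf.uniformContinuous a⟩
  exact ⟨IsometryEquiv.mk
    (Equiv.ofBijective _ ⟨hext.injective, hext.surjective_of_denseRange hext_dense⟩) hext⟩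

theorem nonempty_isometryEquiv_of_denseRange_of_dist_eq {α X Y : Type*} [MetricSpace X]
    [MetricSpace Y] [CompleteSpace X] [CompleteSpace Y] {f : α → X} {g : α → Y}
    (hf : DenseRange f) (hg : DenseRange g) (h : ∀ a b, dist (f a) (f b) = dist (g a) (g b)) :
    Nonempty (X ≃ᵢ Y) := by
  let _ : PseudoMetricSpace α := PseudoMetricSpace.induced f inferInstance
  have hf_iso : Isometry f := Isometry.of_dist_eq fun _ _ => rfl
  have hg_iso : Isometry g := Isometry.of_dist_eq fun a b => (h a b).symm
  obtain ⟨eX⟩ := hf_iso.nonempty_completion_isometryEquiv hf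
  obtain ⟨eY⟩ := hg_iso.nonempty_completion_isometryEquiv hg
  exact ⟨eX.symm.trans eY⟩

theorem Dense.exists_denseRange_of_mk_le {X α : Type u} [TopologicalSpace X] [Nonempty X]
    {D : Set X} (hD : Dense D) (hcard : #D ≤ #α) : ∃ f : α → X, DenseRange f := by
  obtain ⟨e⟩ := hcard
  have : Nonempty D := hD.nonempty.to_subtype
  exact ⟨(↑) ∘ invFun e, hD.denseRange_val.comp (invFun_surjective e.injective).denseRange
    continuous_subtype_val⟩

theorem Cardinal.continuum_power_eq_two_power {κ : Cardinal} (hκ : ℵ₀ ≤ κ) : 𝔠 ^ κ = 2 ^ κ := by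
  rw [← two_power_aleph0, ← power_mul, aleph0_mul_eq hκ]

/-- Let `λ` be an infinite cardinal and let `(E i)_{i ∈ I}` be a family of real Banach spaces,
each having a dense subset of cardinality at most `λ`, such that for distinct `i, j ∈ I` there
is no continuous linear bijection with continuous inverse between `E i` and `E j`. Then the
cardinality of `I` is at most `2 ^ λ`. -/
theorem statement17 (lam : Cardinal.{u}) (hlam : Cardinal.aleph0 ≤ lam)
    (I : Type u) (E : I → Type u)
    [∀ i, NormedAddCommGroup (E i)] [∀ i, NormedSpace ℝ (E i)] [∀ i, CompleteSpace (E i)]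
    (hdense : ∀ i, ∃ D : Set (E i), Dense D ∧ #D ≤ lam)
    (hiso : ∀ i j, i ≠ j → IsEmpty (E i ≃L[ℝ] E j)) :
    #I ≤ 2 ^ lam := by
  have hfam (i : I) : ∃ f : lam.out → E i, DenseRange f := by
    obtain ⟨D, hD, hcard⟩ := hdense i
    exact hD.exists_denseRange_of_mk_le (by rwa [mk_out])
  choose f hf using hfam
  have hinj : Injective fun i (p : lam.out × lam.out) => dist (f i p.1) (f i p.2) := by
    intro i j hij
    by_contra hne
    obtain ⟨e⟩ := nonempty_isometryEquiv_of_denseRange_of_dist_eq (hf i) (hf j)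
      fun a b => congrFun hij (a, b)
    exact (hiso i j hne).false e.toRealLinearIsometryEquiv.toContinuousLinearEquiv
  calc #I ≤ #(lam.out × lam.out → ℝ) := mk_le_of_injective hinj
    _ = 2 ^ lam := by
      rw [mk_arrow, mk_prod, mk_real, mk_out, lift_id, lift_continuum, lift_uzero,
        mul_eq_self hlam, continuum_power_eq_two_power hlam]
end
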